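/- Let G and G' be finite groups, and let X be a finite (G,G')-biset (a finite set with a right G-action and a free left G'-action that commute). Then X decomposes as a disjoint union of indecomposable sub-bisets, and each indecomposable finite (G,G')-biset is isomorphic to G' ×_{(H,φ)} G for some subgroup H ≤ G and homomorphism φ : H → G'. -/

import Mathlib

/-- The relation on `G' × G` generated by `(x, g·y) ∼ (x·ψ(g), y)` for `g ∈ H`. -/
def BisetRel {G G' : Type*} [Group G] [Group G'] (H : Subgroup G) (ψ : ↥H →* G') :
    G' × G → G' × G → Prop :=
  fun a b => ∃ h : ↥H, b = (a.1 * ψ h, (h : G)⁻¹ * a.2)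

/-- The right `G`-action on the biset `G' ×_{(H,ψ)} G`. -/
def bisetMulR {G G' : Type*} [Group G] [Group G'] (H : Subgroup G) (ψ : ↥H →* G')
    (q : Quot (BisetRel H ψ)) (g : G) : Quot (BisetRel H ψ) :=
  Quot.lift (fun xy => Quot.mk (BisetRel H ψ) (xy.1, xy.2 * g))
    (by rintro a b ⟨h, rfl⟩; exact Quot.sound ⟨h, by simp [mul_assoc]⟩) q

/-- The left `G'`-action on the biset `G' ×_{(H,ψ)} G`. -/
def bisetMulL {G G' : Type*} [Group G] [Group G'] (H : Subgroup G) (ψ : ↥H →* G')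
    (g' : G') (q : Quot (BisetRel H ψ)) : Quot (BisetRel H ψ) :=
  Quot.lift (fun xy => Quot.mk (BisetRel H ψ) (g' * xy.1, xy.2))
    (by rintro a b ⟨h, rfl⟩; exact Quot.sound ⟨h, by simp [mul_assoc]⟩) q

/-! The elements `h ∈ G` for which `x • h` lies in the `G'`-orbit of `x` form a subgroup `H`,
and freeness of the left action makes the element `φ h ∈ G'` with `φ h • x = x • h` unique, so
`φ : H →* G'`. The map `(g', g) ↦ g' • x • g` identifies exactly the pairs related by `(H, φ)`:
if `a' • x • a = b' • x • b`, then `a b⁻¹ ∈ H` with `φ (a b⁻¹) = a'⁻¹ b'`. -/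

open MulOpposite

namespace Biset

variable {G G' X : Type*} [Group G] [Group G'] [MulAction G' X] [MulAction Gᵐᵒᵖ X]
  [SMulCommClass G' Gᵐᵒᵖ X]

theorem equivalence_exists_smul_op_smul :
    Equivalence (fun x y : X => ∃ (g' : G') (g : G), g' • op g • x = y) where
  refl x := ⟨1, 1, by simp⟩
  symm := by
    rintro x _ ⟨g', g, rfl⟩
    exact ⟨g'⁻¹, g⁻¹, by rw [smul_comm g' (op g), smul_smul (op g⁻¹), ← op_mul,
      mul_inv_cancel, op_one, one_smul, inv_smul_smul]⟩
  trans := by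
    rintro x _ _ ⟨a', a, rfl⟩ ⟨b', b, rfl⟩
    exact ⟨b' * a', a * b, by rw [op_mul, mul_smul, mul_smul, smul_comm a']⟩

variable (G G') in
def orbitStabilizer (x : X) : Subgroup G where
  carrier := {g | ∃ g' : G', g' • x = op g • x}
  one_mem' := ⟨1, by simp⟩
  mul_mem' := by
    rintro a b ⟨a', ha⟩ ⟨b', hb⟩
    exact ⟨a' * b', by rw [mul_smul, hb, smul_comm, ha, op_mul, mul_smul]⟩
  inv_mem' := by
    rintro g ⟨g', hg⟩
    refine ⟨g'⁻¹, ?_⟩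
    rw [inv_smul_eq_iff, smul_comm g' (op g⁻¹) x, hg, smul_smul, ← op_mul, mul_inv_cancel,
      op_one, one_smul]

theorem mem_orbitStabilizer {x : X} {g : G} :
    g ∈ orbitStabilizer G G' x ↔ ∃ g' : G', g' • x = op g • x :=
  Iff.rfl

variable [IsCancelSMul G' X]

variable (G G') in
noncomputable def orbitStabilizerHom (x : X) : orbitStabilizer G G' x →* G' :=
  have spec (h : orbitStabilizer G G' x) := Classical.choose_spec (mem_orbitStabilizer.mp h.2)
  MonoidHom.mk' (fun h => Classical.choose (mem_orbitStabilizer.mp h.2)) fun a b =>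
    IsCancelSMul.right_cancel _ _ x <| by
      rw [spec, mul_smul, spec, smul_comm, spec, Subgroup.coe_mul, op_mul, mul_smul]

theorem orbitStabilizerHom_smul (x : X) (h : orbitStabilizer G G' x) :
    orbitStabilizerHom G G' x h • x = op (h : G) • x :=
  Classical.choose_spec (mem_orbitStabilizer.mp h.2)

theorem orbitStabilizerHom_eq_of_smul_eq {x : X} {h : orbitStabilizer G G' x} {g' : G'}
    (hg' : g' • x = op (h : G) • x) : orbitStabilizerHom G G' x h = g' :=
  IsCancelSMul.right_cancel _ _ x (by rw [orbitStabilizerHom_smul, hg'])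

variable (G G') in
noncomputable def toOrbit (x : X) :
    Quot (BisetRel (orbitStabilizer G G' x) (orbitStabilizerHom G G' x)) → X :=
  Quot.lift (fun p => p.1 • op p.2 • x) <| by
    rintro ⟨a', a⟩ _ ⟨h, rfl⟩
    simp only [op_mul, op_inv, mul_smul, smul_comm (orbitStabilizerHom G G' x h) (op a),
      smul_comm (orbitStabilizerHom G G' x h) (op (h : G))⁻¹, orbitStabilizerHom_smul,
      inv_smul_smul]

theorem toOrbit_mk (x : X) (p : G' × G) : toOrbit G G' x (Quot.mk _ p) = p.1 • op p.2 • x := rfl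

theorem toOrbit_injective (x : X) : Function.Injective (toOrbit G G' x) := by
  rintro ⟨a', a⟩ ⟨b', b⟩ hab
  simp only [toOrbit_mk] at hab
  have hsmul : (a'⁻¹ * b') • x = op (a * b⁻¹) • x := by
    rw [mul_smul, inv_smul_eq_iff, op_mul, mul_smul, smul_comm a' (op b⁻¹), hab,
      smul_comm b' (op b), op_inv, inv_smul_smul]
  refine Quot.sound ⟨⟨a * b⁻¹, mem_orbitStabilizer.mpr ⟨_, hsmul⟩⟩, ?_⟩
  rw [orbitStabilizerHom_eq_of_smul_eq hsmul]
  ext <;> simp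

theorem range_toOrbit (x : X) :
    Set.range (toOrbit G G' x) = {y | ∃ (g' : G') (g : G), g' • op g • x = y} := by
  ext y
  simp [toOrbit, Set.range_quot_lift, Prod.exists]

theorem toOrbit_bisetMulR (x : X)
    (q : Quot (BisetRel (orbitStabilizer G G' x) (orbitStabilizerHom G G' x))) (g : G) :
    toOrbit G G' x (bisetMulR _ _ q g) = op g • toOrbit G G' x q := by
  induction q using Quot.ind
  simp only [bisetMulR, toOrbit_mk, op_mul, mul_smul, smul_comm]

theorem toOrbit_bisetMulL (x : X) (g' : G')
    (q : Quot (BisetRel (orbitStabilizer G G' x) (orbitStabilizerHom G G' x))) :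
    toOrbit G G' x (bisetMulL _ _ g' q) = g' • toOrbit G G' x q := by
  induction q using Quot.ind
  simp only [bisetMulL, toOrbit_mk, mul_smul]

end Biset

theorem biset_decomposition_general {G G' X : Type*} [Group G] [Group G']
    (smulR : X → G → X) (hR1 : ∀ x, smulR x 1 = x)
    (hRm : ∀ x g₁ g₂, smulR x (g₁ * g₂) = smulR (smulR x g₁) g₂)
    (smulL : G' → X → X) (hL1 : ∀ x, smulL 1 x = x)
    (hLm : ∀ g₁' g₂' x, smulL (g₁' * g₂') x = smulL g₁' (smulL g₂' x))
    (hcomm : ∀ g' x g, smulL g' (smulR x g) = smulR (smulL g' x) g)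
    (hfree : ∀ (g' : G') (x : X), smulL g' x = x → g' = 1) :
    Equivalence (fun x y : X => ∃ (g' : G') (g : G), smulL g' (smulR x g) = y) ∧
    ∀ x : X, ∃ (H : Subgroup G) (φ : ↥H →* G') (f : Quot (BisetRel H φ) → X),
      Function.Injective f ∧
      Set.range f = {y | ∃ (g' : G') (g : G), smulL g' (smulR x g) = y} ∧
      (∀ q g, f (bisetMulR H φ q g) = smulR (f q) g) ∧
      (∀ g' q, f (bisetMulL H φ g' q) = smulL g' (f q)) := by
  let _ : MulAction G' X := { smul := smulL, one_smul := hL1, mul_smul := hLm }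
  let _ : MulAction Gᵐᵒᵖ X :=
    { smul g x := smulR x g.unop, one_smul := hR1, mul_smul a b x := hRm x b.unop a.unop }
  have : SMulCommClass G' Gᵐᵒᵖ X := ⟨fun g' g x => hcomm g' x g.unop⟩
  have : IsCancelSMul G' X := isCancelSMul_iff_eq_one_of_smul_eq.mpr hfree
  exact ⟨Biset.equivalence_exists_smul_op_smul, fun x =>
    ⟨_, _, Biset.toOrbit G G' x, Biset.toOrbit_injective x, Biset.range_toOrbit x,
      Biset.toOrbit_bisetMulR x, Biset.toOrbit_bisetMulL x⟩⟩

/-- A finite `(G,G')`-biset decomposes as the disjoint union of its orbits under the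
combined action (the orbit relation is an equivalence), and each orbit — i.e. each
indecomposable finite `(G,G')`-biset — is isomorphic, equivariantly for both actions,
to a standard biset `G' ×_{(H,φ)} G`. -/
theorem biset_decomposition {G G' X : Type*} [Group G] [Group G'] [Finite G] [Finite G']
    [Finite X]
    (smulR : X → G → X) (hR1 : ∀ x, smulR x 1 = x)
    (hRm : ∀ x g₁ g₂, smulR x (g₁ * g₂) = smulR (smulR x g₁) g₂)
    (smulL : G' → X → X) (hL1 : ∀ x, smulL 1 x = x)
    (hLm : ∀ g₁' g₂' x, smulL (g₁' * g₂') x = smulL g₁' (smulL g₂' x))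
    (hcomm : ∀ g' x g, smulL g' (smulR x g) = smulR (smulL g' x) g)
    (hfree : ∀ (g' : G') (x : X), smulL g' x = x → g' = 1) :
    Equivalence (fun x y : X => ∃ (g' : G') (g : G), smulL g' (smulR x g) = y) ∧
    ∀ x : X, ∃ (H : Subgroup G) (φ : ↥H →* G') (f : Quot (BisetRel H φ) → X),
      Function.Injective f ∧
      Set.range f = {y | ∃ (g' : G') (g : G), smulL g' (smulR x g) = y} ∧
      (∀ q g, f (bisetMulR H φ q g) = smulR (f q) g) ∧
      (∀ g' q, f (bisetMulL H φ g' q) = smulL g' (f q)) :=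
  biset_decomposition_general smulR hR1 hRm smulL hL1 hLm hcomm hfree
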